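/- arXiv:1504.02568 — 6 statements merged into one kernel-verified Lean document; each statement's English description precedes it below -/
import Mathlib

section
/- If ν is an admissible configuration for the multiplicity array L (all vacancy numbers p_i^{(a)}(ν,L) ≥ 0), then for any m ∈ ℤ_{>0} the scaled configuration S_m ν is admissible for S_m L, i.e. all vacancy numbers p_i^{(a)}(S_m ν, S_m L) ≥ 0. -/
open Finset

/-- The Cartan matrix of type `A_n`. -/
def cartanA (a b : ℕ) : ℤ :=
  2 * (if a = b then 1 else 0) - (if a = b + 1 then 1 else 0) - (if b = a + 1 then 1 else 0)

/-- Vacancy numbers `p_i^{(a)}(ν, L)`. -/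
def vacP (n J : ℕ) (L ν : ℕ → ℕ → ℕ) (a i : ℕ) : ℤ :=
  ∑ j ∈ Icc 1 J, ((L a j : ℤ) * min (i : ℤ) j -
    ∑ b ∈ Icc 1 n, cartanA a b * min (i : ℤ) j * ν b j)

/-- `S_m` on multiplicity data: each part of length `j` becomes a part of length `m·j`. -/
def scaleMul (m : ℕ) (f : ℕ → ℕ → ℕ) : ℕ → ℕ → ℕ :=
  fun a j => if m ∣ j then f a (j / m) else 0

/-- The coefficient of `min i j` in the vacancy number. -/
def coefC (n : ℕ) (L ν : ℕ → ℕ → ℕ) (a k : ℕ) : ℤ :=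
  (L a k : ℤ) - ∑ b ∈ Icc 1 n, cartanA a b * ν b k

lemma vacP_eq (n J : ℕ) (L ν : ℕ → ℕ → ℕ) (a i : ℕ) :
    vacP n J L ν a i = ∑ j ∈ Icc 1 J, min (i : ℤ) j * coefC n L ν a j := by
  unfold vacP coefC
  refine Finset.sum_congr rfl fun j hj => ?_
  rw [mul_sub, Finset.mul_sum]
  congr 1
  · ring
  · exact Finset.sum_congr rfl fun b _ => by ring

lemma coefC_scale_mul (n m : ℕ) (hm : 0 < m) (L ν : ℕ → ℕ → ℕ) (a k : ℕ) :
    coefC n (scaleMul m L) (scaleMul m ν) a (m * k) = coefC n L ν a k := by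
  unfold coefC scaleMul
  have h : m ∣ m * k := Dvd.intro k rfl
  simp [h, Nat.mul_div_cancel_left _ hm]

lemma coefC_scale_notdvd (n m : ℕ) (L ν : ℕ → ℕ → ℕ) (a j : ℕ) (h : ¬ m ∣ j) :
    coefC n (scaleMul m L) (scaleMul m ν) a j = 0 := by
  unfold coefC scaleMul
  simp [h]

lemma scaledVac_eq (n J m : ℕ) (hm : 0 < m) (L ν : ℕ → ℕ → ℕ) (a i : ℕ) :
    vacP n (m * J) (scaleMul m L) (scaleMul m ν) a i
      = ∑ k ∈ Icc 1 J, min (i : ℤ) ((m * k : ℕ) : ℤ) * coefC n L ν a k := by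
  rw [vacP_eq]
  rw [← Finset.sum_filter_add_sum_filter_not (Icc 1 (m * J)) (fun j => m ∣ j)]
  have h2 : ∑ j ∈ (Icc 1 (m * J)).filter (fun j => ¬ m ∣ j),
      min (i : ℤ) j * coefC n (scaleMul m L) (scaleMul m ν) a j = 0 := by
    refine Finset.sum_eq_zero fun j hj => ?_
    rw [coefC_scale_notdvd n m L ν a j (Finset.mem_filter.mp hj).2, mul_zero]
  rw [h2, add_zero]
  have himg : (Icc 1 (m * J)).filter (fun j => m ∣ j) = (Icc 1 J).image (fun k => m * k) := by
    ext j
    simp only [Finset.mem_filter, Finset.mem_image, Finset.mem_Icc]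
    constructor
    · rintro ⟨⟨h1, h2⟩, k, rfl⟩
      exact ⟨k, ⟨by nlinarith [Nat.one_le_iff_ne_zero.mpr (by rintro rfl; omega : k ≠ 0)],
        Nat.le_of_mul_le_mul_left h2 hm⟩, rfl⟩
    · rintro ⟨k, ⟨h1, h2⟩, rfl⟩
      exact ⟨⟨by nlinarith, Nat.mul_le_mul_left m h2⟩, k, rfl⟩
  rw [himg, Finset.sum_image (fun x _ y _ h => by
    exact Nat.eq_of_mul_eq_mul_left hm h)]
  exact Finset.sum_congr rfl fun k _ => by rw [coefC_scale_mul n m hm L ν a k]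

lemma min_scale (m q r k : ℕ) (hr : r < m) :
    (m : ℤ) * min ((m * q + r : ℕ) : ℤ) ((m * k : ℕ) : ℤ)
      = ((m : ℤ) - r) * min ((m * q : ℕ) : ℤ) ((m * k : ℕ) : ℤ)
        + r * min ((m * (q + 1) : ℕ) : ℤ) ((m * k : ℕ) : ℤ) := by
  push_cast
  rcases le_or_gt k q with h | h
  · have hk : (k : ℤ) ≤ q := by exact_mod_cast h
    rw [min_eq_right (by nlinarith : (m : ℤ) * k ≤ m * q + r),
        min_eq_right (by nlinarith : (m : ℤ) * k ≤ m * q),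
        min_eq_right (by nlinarith : (m : ℤ) * k ≤ m * (q + 1))]
    ring
  · have hk : (q : ℤ) + 1 ≤ k := by exact_mod_cast h
    rw [min_eq_left (by nlinarith : (m : ℤ) * q + r ≤ m * k),
        min_eq_left (by nlinarith : (m : ℤ) * q ≤ m * k),
        min_eq_left (by nlinarith : (m : ℤ) * (q + 1) ≤ m * k)]
    ring

lemma min_mul_left (m t k : ℕ) :
    min ((m * t : ℕ) : ℤ) ((m * k : ℕ) : ℤ) = (m : ℤ) * min (t : ℤ) (k : ℤ) := by
  push_cast
  rcases le_total (t : ℤ) k with h | h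
  · rw [min_eq_left h, min_eq_left (by nlinarith [Nat.cast_nonneg (α := ℤ) m] : (m : ℤ) * t ≤ m * k)]
  · rw [min_eq_right h, min_eq_right (by nlinarith [Nat.cast_nonneg (α := ℤ) m] : (m : ℤ) * k ≤ m * t)]

lemma vacP_zero (n J : ℕ) (L ν : ℕ → ℕ → ℕ) (a : ℕ) :
    vacP n J L ν a 0 = 0 := by
  rw [vacP_eq]
  refine Finset.sum_eq_zero fun j hj => ?_
  rw [Nat.cast_zero, min_eq_left (by positivity : (0:ℤ) ≤ (j:ℤ)), zero_mul]

/-- if `ν` is an admissible configuration for `L` (all vacancy numbers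
nonnegative), then for any `m > 0` the scaled configuration `S_m ν` is admissible for
`S_m L`: all of its vacancy numbers are nonnegative. -/
theorem scale_admissible (n J m : ℕ) (hm : 0 < m) (L ν : ℕ → ℕ → ℕ)
    (hadm : ∀ a ∈ Icc 1 n, ∀ i, 0 < i → 0 ≤ vacP n J L ν a i) :
    ∀ a ∈ Icc 1 n, ∀ i, 0 < i →
      0 ≤ vacP n (m * J) (scaleMul m L) (scaleMul m ν) a i := by
  intro a ha i hi
  set q := i / m with hq
  set r := i % m with hrdef
  have hqr : m * q + r = i := Nat.div_add_mod i m
  have hr : r < m := Nat.mod_lt i hm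
  have key : (m : ℤ) * vacP n (m * J) (scaleMul m L) (scaleMul m ν) a i
      = ((m : ℤ) - r) * ((m : ℤ) * vacP n J L ν a q)
        + (r : ℤ) * ((m : ℤ) * vacP n J L ν a (q + 1)) := by
    rw [scaledVac_eq n J m hm L ν a i, Finset.mul_sum]
    rw [vacP_eq n J L ν a q, vacP_eq n J L ν a (q + 1)]
    rw [Finset.mul_sum, Finset.mul_sum, Finset.mul_sum, Finset.mul_sum,
      ← Finset.sum_add_distrib]
    refine Finset.sum_congr rfl fun k hk => ?_
    have h1 := min_scale m q r k hr
    rw [hqr] at h1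
    have h2 := min_mul_left m q k
    have h3 := min_mul_left m (q + 1) k
    calc (m : ℤ) * (min (i : ℤ) ((m * k : ℕ) : ℤ) * coefC n L ν a k)
        = ((m : ℤ) * min (i : ℤ) ((m * k : ℕ) : ℤ)) * coefC n L ν a k := by ring
      _ = (((m : ℤ) - r) * min ((m * q : ℕ) : ℤ) ((m * k : ℕ) : ℤ)
            + r * min ((m * (q + 1) : ℕ) : ℤ) ((m * k : ℕ) : ℤ)) * coefC n L ν a k := by
          rw [h1]
      _ = ((m : ℤ) - r) * ((m : ℤ) * (min (q : ℤ) k * coefC n L ν a k))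
            + (r : ℤ) * ((m : ℤ) * (min ((q : ℤ) + 1) k * coefC n L ν a k)) := by
          rw [h2, h3]; push_cast; ring
  have h1 : 0 ≤ ((m : ℤ) - r) * ((m : ℤ) * vacP n J L ν a q) := by
    rcases Nat.eq_zero_or_pos q with h | h
    · rw [h, vacP_zero]; simp
    · have := hadm a ha q h
      have hmr : (0 : ℤ) ≤ (m : ℤ) - r := by
        have : (r : ℤ) < m := by exact_mod_cast hr
        linarith
      exact mul_nonneg hmr (mul_nonneg (by positivity) this)
  have h2 : 0 ≤ (r : ℤ) * ((m : ℤ) * vacP n J L ν a (q + 1)) := by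
    have := hadm a ha (q + 1) (Nat.succ_pos q)
    exact mul_nonneg (by positivity) (mul_nonneg (by positivity) this)
  have hfinal : 0 ≤ (m : ℤ) * vacP n (m * J) (scaleMul m L) (scaleMul m ν) a i := by
    rw [key]; exact add_nonneg h1 h2
  have hmz : (0 : ℤ) < m := by exact_mod_cast hm
  nlinarith [hfinal, hmz]
end

section
/- Suppose δ removes one box from a row of length ℓ^{(a)} in ν^{(a)} for each a with ℓ^{(1)} ≤ ℓ^{(2)} ≤ ⋯ (with ℓ^{(a)} = ∞ meaning no box removed), and removes a row of length 1 from L^{(1)}. Then the new vacancy numbers satisfy p_i^{(a)}(δν) = p_i^{(a)}(ν) − χ(ℓ^{(a−1)} ≤ i) + 2χ(ℓ^{(a)} ≤ i) − χ(ℓ^{(a+1)} ≤ i), where χ(true)=1, χ(false)=0 and ℓ^{(0)} = 1. -/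
open Finset

/-- `Q_i(μ)` for the partition with multiplicities `f j`, supported on `1 ≤ j ≤ J`. -/
def Qpart (J : ℕ) (f : ℕ → ℕ) (i : ℕ) : ℤ :=
  ∑ j ∈ Icc 1 J, (f j : ℤ) * min (j : ℤ) i

/-- Vacancy numbers `p_i^{(a)} = Q_i(L^{(a)}) + Q_i(ν^{(a−1)}) + Q_i(ν^{(a+1)}) − 2Q_i(ν^{(a)})`. -/
def vacQ (J : ℕ) (L ν : ℕ → ℕ → ℕ) (a i : ℕ) : ℤ :=
  Qpart J (L a) i + Qpart J (ν (a - 1)) i + Qpart J (ν (a + 1)) i - 2 * Qpart J (ν a) i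

lemma Qpart_diff (J : ℕ) (f g : ℕ → ℕ) (i : ℕ) :
    Qpart J g i - Qpart J f i = ∑ j ∈ Icc 1 J, ((g j : ℤ) - f j) * min (j : ℤ) i := by
  simp [Qpart, sub_mul, Finset.sum_sub_distrib]

lemma key_sum (J i m : ℕ) (hi : 1 ≤ i) (hm1 : 1 ≤ m) (hmJ : m ≤ J) :
    ∑ j ∈ Icc 1 J, ((if m = j then (-1:ℤ) else 0) + (if m = j + 1 then 1 else 0)) * min (j:ℤ) i
      = - (if m ≤ i then 1 else 0) := by
  have h1 : ∑ j ∈ Icc 1 J, (if m = j then (-(min (j:ℤ) i)) else 0) = -(min (m:ℤ) i) := by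
    rw [Finset.sum_ite_eq]
    simp [mem_Icc, hm1, hmJ]
  obtain ⟨m', rfl⟩ := Nat.exists_eq_add_of_le hm1
  rw [add_comm 1 m'] at *
  have hsplit : ∑ j ∈ Icc 1 J, ((if m'+1 = j then (-1:ℤ) else 0) + (if m'+1 = j + 1 then 1 else 0)) * min (j:ℤ) i
      = (∑ j ∈ Icc 1 J, (if m'+1 = j then (-(min (j:ℤ) i)) else 0))
        + ∑ j ∈ Icc 1 J, (if m' = j then (min (j:ℤ) i) else 0) := by
    rw [← Finset.sum_add_distrib]
    apply Finset.sum_congr rfl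
    intro j hj
    rcases eq_or_ne (m'+1) j with h | h <;> rcases eq_or_ne m' j with h2 | h2 <;>
      simp [h, h2, add_mul]
  rw [hsplit, h1, Finset.sum_ite_eq]
  rcases Nat.eq_zero_or_pos m' with h0 | h0
  · subst h0
    simp [mem_Icc]
    omega
  · have hmem : m' ∈ Icc 1 J := by simp [mem_Icc]; omega
    rw [if_pos hmem]
    have : min ((m':ℤ)) i - min ((m':ℤ)+1) i = -(if m'+1 ≤ i then 1 else 0) := by
      simp only [min_def]
      split_ifs <;> omega
    push_cast at this ⊢
    linarith [this]

lemma Qnu (J : ℕ) (ν ν' : ℕ → ℕ → ℕ) (ℓ : ℕ → WithTop ℕ)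
    (hℓrange : ∀ a j, 1 ≤ a → ℓ a = (j : WithTop ℕ) → 1 ≤ j ∧ j ≤ J)
    (hν' : ∀ a j, 1 ≤ a → 1 ≤ j →
      (ν' a j : ℤ) = (ν a j : ℤ) - (if ℓ a = (j : WithTop ℕ) then 1 else 0)
        + (if ℓ a = ((j + 1 : ℕ) : WithTop ℕ) then 1 else 0))
    (a i : ℕ) (ha : 1 ≤ a) (hi : 1 ≤ i) :
    Qpart J (ν' a) i = Qpart J (ν a) i - (if ℓ a ≤ (i : WithTop ℕ) then 1 else 0) := by
  have hd := Qpart_diff J (ν a) (ν' a) i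
  cases hla : ℓ a with
  | top =>
    have hz : ∀ j ∈ Icc 1 J, ((ν' a j : ℤ) - ν a j) * min (j:ℤ) i = 0 := by
      intro j hj
      rw [hν' a j ha (mem_Icc.mp hj).1, hla, if_neg (WithTop.natCast_ne_top _).symm,
        if_neg (WithTop.natCast_ne_top _).symm]
      ring
    rw [Finset.sum_congr rfl hz] at hd
    simp only [Finset.sum_const_zero] at hd
    rw [if_neg (by simp)]
    linarith [hd]
  | coe m =>
    have hr := hℓrange a m ha (by exact_mod_cast hla)
    have hm1 : 1 ≤ m := by exact_mod_cast hr.1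
    have hmJ : m ≤ J := by exact_mod_cast hr.2
    have hc : ∀ j ∈ Icc 1 J, ((ν' a j : ℤ) - ν a j) * min (j:ℤ) i
        = ((if m = j then (-1:ℤ) else 0) + (if m = j + 1 then 1 else 0)) * min (j:ℤ) i := by
      intro j hj
      rw [hν' a j ha (mem_Icc.mp hj).1, hla]
      simp only [Nat.cast_withTop, WithTop.coe_eq_coe]
      split_ifs <;> ring
    rw [Finset.sum_congr rfl hc, key_sum J i m hi hm1 hmJ] at hd
    have e3 : ((WithTop.some m) ≤ ((i:ℕ) : WithTop ℕ)) ↔ m ≤ i := by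
      simp only [Nat.cast_withTop]
      exact WithTop.coe_le_coe
    rw [if_congr e3 rfl rfl]
    linarith [hd]

lemma QLl (J : ℕ) (L L' : ℕ → ℕ → ℕ)
    (hL' : ∀ a j, (L' a j : ℤ) = (L a j : ℤ) - (if a = 1 ∧ j = 1 then 1 else 0))
    (hJ : 1 ≤ J) (a i : ℕ) (hi : 1 ≤ i) :
    Qpart J (L' a) i = Qpart J (L a) i - (if a = 1 then 1 else 0) := by
  have hd := Qpart_diff J (L a) (L' a) i
  have hc : ∀ j ∈ Icc 1 J, ((L' a j : ℤ) - L a j) * min (j:ℤ) i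
      = (if j = 1 then (if a = 1 then (-1:ℤ) else 0) else 0) := by
    intro j hj
    rw [hL' a j]
    rcases eq_or_ne j 1 with rfl | hj1
    · rcases eq_or_ne a 1 with rfl | ha1 <;> simp [min_def] <;> omega
    · simp [hj1]
  rw [Finset.sum_congr rfl hc, Finset.sum_ite_eq'] at hd
  simp only [mem_Icc, hJ, le_refl, true_and, if_pos] at hd
  split_ifs at hd ⊢ <;> linarith [hd]

/-- suppose `δ` removes one box from a row of length `ℓ^{(a)}` in `ν^{(a)}`
for each `a` (with `ℓ^{(a)} = ∞` meaning no box removed) and removes a row of length `1`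
from `L^{(1)}`.  Then
`p_i^{(a)}(δν) = p_i^{(a)}(ν) − χ(ℓ^{(a−1)} ≤ i) + 2χ(ℓ^{(a)} ≤ i) − χ(ℓ^{(a+1)} ≤ i)`,
where `ℓ^{(0)} = 1`. -/
theorem delta_vacancy (n J : ℕ) (L L' ν ν' : ℕ → ℕ → ℕ) (ℓ : ℕ → WithTop ℕ)
    (hL11 : 0 < L 1 1) (hJ : 1 ≤ J)
    (hℓmono : ∀ a b, a ≤ b → ℓ a ≤ ℓ b)
    (hℓ0 : ℓ 0 = 1)
    (hℓrange : ∀ a j, 1 ≤ a → ℓ a = (j : WithTop ℕ) → 1 ≤ j ∧ j ≤ J)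
    (hν0 : ∀ j, ν 0 j = 0 ∧ ν' 0 j = 0)
    (hL' : ∀ a j, (L' a j : ℤ) = (L a j : ℤ) - (if a = 1 ∧ j = 1 then 1 else 0))
    (hν' : ∀ a j, 1 ≤ a → 1 ≤ j →
      (ν' a j : ℤ) = (ν a j : ℤ) - (if ℓ a = (j : WithTop ℕ) then 1 else 0)
        + (if ℓ a = ((j + 1 : ℕ) : WithTop ℕ) then 1 else 0)) :
    ∀ a ∈ Icc 1 n, ∀ i, 1 ≤ i →
      vacQ J L' ν' a i = vacQ J L ν a i
        - (if ℓ (a - 1) ≤ (i : WithTop ℕ) then 1 else 0)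
        + 2 * (if ℓ a ≤ (i : WithTop ℕ) then 1 else 0)
        - (if ℓ (a + 1) ≤ (i : WithTop ℕ) then 1 else 0) := by
  intro a ha i hi
  obtain ⟨ha1, _⟩ := mem_Icc.mp ha
  have hQν : ∀ b, 1 ≤ b →
      Qpart J (ν' b) i = Qpart J (ν b) i - (if ℓ b ≤ (i : WithTop ℕ) then 1 else 0) :=
    fun b hb => Qnu J ν ν' ℓ hℓrange hν' b i hb hi
  have hQL := QLl J L L' hL' hJ a i hi
  have hQa := hQν a ha1
  have hQa1 := hQν (a + 1) (by omega)
  unfold vacQ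
  rcases eq_or_ne a 1 with rfl | hane
  · -- a = 1 : the (a-1) level is 0
    have h0 : Qpart J (ν' 0) i = Qpart J (ν 0) i := by
      unfold Qpart
      apply Finset.sum_congr rfl
      intro j _
      rw [(hν0 j).1, (hν0 j).2]
    have hℓ0i : ℓ 0 ≤ (i : WithTop ℕ) := by
      rw [hℓ0]
      have : ((1:ℕ) : WithTop ℕ) ≤ ((i:ℕ) : WithTop ℕ) := by exact_mod_cast hi
      simpa using this
    simp only [Nat.sub_self, h0]
    rw [if_pos hℓ0i]
    norm_num at hQL
    rw [hQL, hQa, hQa1]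
    ring
  · have ha2 : 2 ≤ a := by omega
    have hQam1 := hQν (a - 1) (by omega)
    rw [if_neg hane] at hQL
    rw [hQL, hQa, hQa1, hQam1]
    ring
end

section
/- Let β^{(s)} act on a multiplicity array L with L_s^{(r)} > 0 (r ≥ 2) by removing a row of length s from L^{(r)} and adding a row of length s to L^{(1)} and to L^{(r−1)}, and act on ν by adding a row of length s to ν^{(a)} for each 1 ≤ a < r. Then the vacancy numbers are unchanged: p_i^{(a)}(β^{(s)}(ν, L)) = p_i^{(a)}(ν, L) for all a, i. -/
open Finset

lemma Qshift (J s : ℕ) (hs : 1 ≤ s) (hsJ : s ≤ J) (f f' : ℕ → ℕ) (c : ℤ)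
    (h : ∀ j, (f' j : ℤ) = (f j : ℤ) + c * (if j = s then 1 else 0)) (i : ℕ) :
    Qpart J f' i = Qpart J f i + c * min (s : ℤ) (i : ℤ) := by
  unfold Qpart
  have hmem : s ∈ Icc 1 J := mem_Icc.mpr ⟨hs, hsJ⟩
  calc ∑ j ∈ Icc 1 J, (f' j : ℤ) * min (j : ℤ) i
      = ∑ j ∈ Icc 1 J, ((f j : ℤ) * min (j : ℤ) i
          + (if j = s then c * min (s : ℤ) (i : ℤ) else 0)) := by
        refine sum_congr rfl fun j hj => ?_
        rw [h j]
        split_ifs with hj'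
        · subst hj'; ring
        · ring
    _ = _ := by
        rw [Finset.sum_add_distrib,
          Finset.sum_ite_eq' (Icc 1 J) s (fun _ => c * min (s : ℤ) (i : ℤ)), if_pos hmem]

/-- `β^{(s)}` removes a row of length `s` from `L^{(r)}` (`r ≥ 2`),
adds a row of length `s` to `L^{(1)}` and `L^{(r−1)}` (two rows to `L^{(1)}` when `r = 2`),
and adds a row of length `s` to `ν^{(a)}` for each `1 ≤ a < r`.  Then the vacancy
numbers are unchanged: `p_i^{(a)}(β^{(s)}(ν, L)) = p_i^{(a)}(ν, L)` for all `a`, `i`. -/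
theorem beta_vacancy (n J r s : ℕ) (L L' ν ν' : ℕ → ℕ → ℕ)
    (hr : 2 ≤ r) (hrn : r ≤ n) (hs : 1 ≤ s) (hsJ : s ≤ J) (hLrs : 0 < L r s)
    (hL' : ∀ b j, (L' b j : ℤ) = (L b j : ℤ)
      + ((if b = r - 1 then 1 else 0) + (if b = 1 then 1 else 0) - (if b = r then 1 else 0))
        * (if j = s then 1 else 0))
    (hν' : ∀ a j, ν' a j = ν a j + (if 1 ≤ a ∧ a < r ∧ j = s then 1 else 0)) :
    ∀ a ∈ Icc 1 n, ∀ i, 1 ≤ i → vacQ J L' ν' a i = vacQ J L ν a i := by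
  intro a ha i hi
  rw [mem_Icc] at ha
  have hνc : ∀ b j, (ν' b j : ℤ) = (ν b j : ℤ)
      + (if 1 ≤ b ∧ b < r then 1 else 0) * (if j = s then 1 else 0) := by
    intro b j
    have := hν' b j
    split_ifs with h1 h2 h2 <;> push_cast [this] <;> split_ifs <;> omega
  have h1 := Qshift J s hs hsJ (L a) (L' a) _ (hL' a) i
  have h2 := Qshift J s hs hsJ (ν (a - 1)) (ν' (a - 1)) _ (hνc (a - 1)) i
  have h3 := Qshift J s hs hsJ (ν (a + 1)) (ν' (a + 1)) _ (hνc (a + 1)) i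
  have h4 := Qshift J s hs hsJ (ν a) (ν' a) _ (hνc a) i
  have hcoef : ((if a = r - 1 then (1:ℤ) else 0) + (if a = 1 then 1 else 0)
      - (if a = r then 1 else 0))
      + (if 1 ≤ a - 1 ∧ a - 1 < r then (1:ℤ) else 0)
      + (if 1 ≤ a + 1 ∧ a + 1 < r then (1:ℤ) else 0)
      - 2 * (if 1 ≤ a ∧ a < r then (1:ℤ) else 0) = 0 := by
    split_ifs <;> omega
  unfold vacQ
  rw [h1, h2, h3, h4]
  linear_combination (min (s : ℤ) (i : ℤ)) * hcoef
end

section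
/- The new rows of length s added to ν^{(a)} (for 1 ≤ a < r) by β^{(s)}, when given rigging equal to p_s^{(a)}, yield a valid rigged configuration: all riggings remain bounded above by the (unchanged) vacancy numbers, and the configuration β^{(s)}ν is admissible for the new multiplicity array. -/
open Finset

lemma Qdiff (J s : ℕ) (hs : 1 ≤ s) (hsJ : s ≤ J) (f f' : ℕ → ℕ) (c : ℤ)
    (h : ∀ j, (f' j : ℤ) = (f j : ℤ) + c * (if j = s then 1 else 0)) (i : ℕ) :
    (∑ j ∈ Icc 1 J, (f' j : ℤ) * min (j : ℤ) i)
      = (∑ j ∈ Icc 1 J, (f j : ℤ) * min (j : ℤ) i) + c * min (s : ℤ) i := by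
  have hmem : s ∈ Icc 1 J := by simp [hs, hsJ]
  have key : ∀ j ∈ Icc 1 J, (f' j : ℤ) * min (j : ℤ) i
      = (f j : ℤ) * min (j : ℤ) i + (if j = s then c * min (s : ℤ) i else 0) := by
    intro j _
    rw [h j]
    by_cases hj : j = s <;> simp [hj] <;> ring
  rw [Finset.sum_congr rfl key, Finset.sum_add_distrib,
    Finset.sum_ite_eq' (Icc 1 J) s (fun _ => c * min (s : ℤ) i), if_pos hmem]

/-- the new rows of length `s` added to `ν^{(a)}` (`1 ≤ a < r`) by
`β^{(s)}`, when given rigging equal to `p_s^{(a)}`, yield a valid rigged configuration: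
all riggings remain bounded above by the (unchanged) vacancy numbers, and the
configuration `β^{(s)}ν` is admissible for the new multiplicity array. -/
theorem beta_rigged (n J r s : ℕ) (L L' ν ν' : ℕ → ℕ → ℕ)
    (rig rig' : ℕ → ℕ → Multiset ℕ)
    (hr : 2 ≤ r) (hrn : r ≤ n) (hs : 1 ≤ s) (hsJ : s ≤ J) (hLrs : 0 < L r s)
    (hL' : ∀ b j, (L' b j : ℤ) = (L b j : ℤ)
      + ((if b = r - 1 then 1 else 0) + (if b = 1 then 1 else 0) - (if b = r then 1 else 0))
        * (if j = s then 1 else 0))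
    (hν' : ∀ a j, ν' a j = ν a j + (if 1 ≤ a ∧ a < r ∧ j = s then 1 else 0))
    (hadm : ∀ a ∈ Icc 1 n, ∀ i, 1 ≤ i → 0 ≤ vacQ J L ν a i)
    (hrig : ∀ a ∈ Icc 1 n, ∀ i, 1 ≤ i → ∀ x ∈ rig a i, (x : ℤ) ≤ vacQ J L ν a i)
    (hrig' : ∀ a i, rig' a i = rig a i
      + (if 1 ≤ a ∧ a < r ∧ i = s then {(vacQ J L ν a s).toNat} else 0)) :
    (∀ a ∈ Icc 1 n, ∀ i, 1 ≤ i → 0 ≤ vacQ J L' ν' a i) ∧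
    (∀ a ∈ Icc 1 n, ∀ i, 1 ≤ i → ∀ x ∈ rig' a i, (x : ℤ) ≤ vacQ J L' ν' a i) := by
  set cL : ℕ → ℤ := fun b =>
    (if b = r - 1 then 1 else 0) + (if b = 1 then 1 else 0) - (if b = r then 1 else 0) with hcL
  set cν : ℕ → ℤ := fun a => if 1 ≤ a ∧ a < r then 1 else 0 with hcν
  have hνint : ∀ a j, (ν' a j : ℤ) = (ν a j : ℤ) + cν a * (if j = s then 1 else 0) := by
    intro a j
    rw [hν' a j]
    by_cases hj : j = s <;> by_cases ha : 1 ≤ a ∧ a < r <;>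
      simp [hj, ha, hcν] <;> push_cast <;> omega
  have hLint : ∀ b j, (L' b j : ℤ) = (L b j : ℤ) + cL b * (if j = s then 1 else 0) :=
    fun b j => hL' b j
  have hvac : ∀ a, 1 ≤ a → ∀ i, vacQ J L' ν' a i = vacQ J L ν a i := by
    intro a ha i
    unfold vacQ Qpart
    rw [Qdiff J s hs hsJ (L a) (L' a) (cL a) (hLint a) i,
      Qdiff J s hs hsJ (ν (a - 1)) (ν' (a - 1)) (cν (a - 1)) (hνint (a - 1)) i,
      Qdiff J s hs hsJ (ν (a + 1)) (ν' (a + 1)) (cν (a + 1)) (hνint (a + 1)) i,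
      Qdiff J s hs hsJ (ν a) (ν' a) (cν a) (hνint a) i]
    have hcoef : cL a + cν (a - 1) + cν (a + 1) - 2 * cν a = 0 := by
      simp only [hcL, hcν]
      split_ifs <;> omega
    linear_combination (min (s : ℤ) i) * hcoef
  constructor
  · intro a ha i hi
    rw [hvac a (by simp at ha; omega) i]
    exact hadm a ha i hi
  · intro a ha i hi x hx
    rw [hvac a (by simp at ha; omega) i]
    rw [hrig' a i] at hx
    rcases Multiset.mem_add.mp hx with h1 | h2
    · exact hrig a ha i hi x h1
    · by_cases hc : 1 ≤ a ∧ a < r ∧ i = s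
      · simp [hc] at h2
        subst h2
        have h0 : 0 ≤ vacQ J L ν a s := hadm a ha s hs
        rw [Int.toNat_of_nonneg h0, hc.2.2]
      · simp [hc] at h2
end

section
/- Define the transposed configuration data by N_{ai}(ν) = Σ_{j≥i} (m_j^{(a−1)} − m_j^{(a)}) (with m^{(0)} ≡ 0). Then the transpose operation on rigged configurations, given by Ñ_{ia} = −N_{ai} + χ((a,i) ∈ λ) − Σ_{b,j} L_j^{(b)} χ(a ≤ b and i ≤ j), is an involution: applying the transformation twice (with L̃_i^{(a)} = L_a^{(i)} and the weight partition λ replaced appropriately by its transpose) returns the original configuration ν. -/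
open Finset

/-- The transpose transform on column-depth data:
`Ñ_{ia} = −N_{ai} + χ((a,i) ∈ λ) − Σ_{b,j} L_j^{(b)} χ(a ≤ b ∧ i ≤ j)`,
all indices running over `{1, …, M}` (`n` is assumed large enough). Here the argument
order is `(NtrM M N lam L) i a = Ñ_{ia}`. -/
def NtrM (M : ℕ) (N : ℕ → ℕ → ℤ) (lam : ℕ → ℕ) (L : ℕ → ℕ → ℕ) (i a : ℕ) : ℤ :=
  -N a i + (if 1 ≤ i ∧ i ≤ lam a then 1 else 0)
    - ∑ b ∈ Icc a M, ∑ j ∈ Icc i M, (L b j : ℤ)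

/-- The transpose of the partition `lam` (supported on `{1, …, M}`). -/
def lamTr (M : ℕ) (lam : ℕ → ℕ) (i : ℕ) : ℕ :=
  ((Icc 1 M).filter fun a => i ≤ lam a).card

/-- The transposed multiplicity array `L̃_i^{(a)} = L_a^{(i)}`. -/
def Ltr (L : ℕ → ℕ → ℕ) : ℕ → ℕ → ℕ := fun a j => L j a

/-- with `N_{ai}(ν) = Σ_{j≥i} (m_j^{(a−1)} − m_j^{(a)})` (`m^{(0)} ≡ 0`),
the transpose operation on rigged configurations is an involution: applying the
transformation twice (with `L̃_i^{(a)} = L_a^{(i)}` and the weight partition `λ`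
replaced by its transpose) returns the original configuration. -/
theorem transpose_involution (M : ℕ) (mν : ℕ → ℕ → ℕ) (L : ℕ → ℕ → ℕ) (lam : ℕ → ℕ)
    (hlam : ∀ a b, a ≤ b → lam b ≤ lam a) (hlamM : ∀ a, lam a ≤ M)
    (hm0 : ∀ j, mν 0 j = 0)
    (N : ℕ → ℕ → ℤ)
    (hN : ∀ a i, N a i = ∑ j ∈ Icc i M, ((mν (a - 1) j : ℤ) - (mν a j : ℤ))) :
    ∀ a ∈ Icc 1 M, ∀ i ∈ Icc 1 M,
      NtrM M (fun i' a' => NtrM M N lam L i' a') (lamTr M lam) (Ltr L) a i = N a i := by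
  intro a ha i hi
  simp only [mem_Icc] at ha hi
  have key : (1 ≤ a ∧ a ≤ lamTr M lam i) ↔ (1 ≤ i ∧ i ≤ lam a) := by
    unfold lamTr
    constructor
    · rintro ⟨-, hcard⟩
      refine ⟨hi.1, ?_⟩
      by_contra hgt
      push_neg at hgt
      have hsub : (Icc 1 M).filter (fun b => i ≤ lam b) ⊆ Icc 1 (a - 1) := by
        intro b hb
        simp only [mem_filter, mem_Icc] at hb
        refine mem_Icc.mpr ⟨hb.1.1, ?_⟩
        by_contra hba
        push_neg at hba
        have : a ≤ b := by omega
        have := hlam a b this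
        omega
      have := Finset.card_le_card hsub
      rw [Nat.card_Icc] at this
      omega
    · rintro ⟨-, hle⟩
      refine ⟨ha.1, ?_⟩
      have hsub : Icc 1 a ⊆ (Icc 1 M).filter (fun b => i ≤ lam b) := by
        intro b hb
        simp only [mem_Icc] at hb
        simp only [mem_filter, mem_Icc]
        exact ⟨⟨hb.1, le_trans hb.2 ha.2⟩, le_trans hle (hlam b a hb.2)⟩
      have := Finset.card_le_card hsub
      rw [Nat.card_Icc] at this
      omega
  have hS : ∑ b ∈ Icc i M, ∑ j ∈ Icc a M, ((Ltr L) b j : ℤ)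
      = ∑ b ∈ Icc a M, ∑ j ∈ Icc i M, (L b j : ℤ) := by
    rw [Finset.sum_comm]; rfl
  simp only [NtrM]
  rw [hS, if_congr key rfl rfl]
  ring
end

section
/- Let β^{(s)} add a row of length s to ν^{(a)} for 1 ≤ a < r and modify L accordingly (removing a row of length s from L^{(r)}, adding rows of length s to L^{(1)} and L^{(r−1)}). Then the transposed column-depth data satisfy Ñ'_{ia} = Ñ_{ia} for all i, a; i.e. tr(β^{(s)}(ν)) = tr(ν) as configurations. -/
open Finset

/-- under `β^{(s)}` one has `N'_{ai} = N_{ai} + (δ_{ar} − δ_{a1})χ(i ≤ s)`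
and `L'^{(b)}_j = L^{(b)}_j + (δ_{b,r−1} + δ_{b,1} − δ_{b,r})δ_{js}` with `λ` unchanged;
then the transposed column-depth data are unchanged: `Ñ'_{ia} = Ñ_{ia}` for all `i, a`,
i.e. `tr(β^{(s)}(ν)) = tr(ν)` as configurations. -/
theorem beta_transpose_invariant (M r s : ℕ)
    (hr : 2 ≤ r) (hrM : r ≤ M) (hs : 1 ≤ s) (hsM : s ≤ M)
    (N N' : ℕ → ℕ → ℤ) (L L' : ℕ → ℕ → ℕ) (lam : ℕ → ℕ) (hLrs : 0 < L r s)
    (hN' : ∀ a i, N' a i = N a i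
      + ((if a = r then 1 else 0) - (if a = 1 then 1 else 0)) * (if i ≤ s then 1 else 0))
    (hL' : ∀ b j, (L' b j : ℤ) = (L b j : ℤ)
      + ((if b = r - 1 then 1 else 0) + (if b = 1 then 1 else 0) - (if b = r then 1 else 0))
        * (if j = s then 1 else 0)) :
    ∀ a ∈ Icc 1 M, ∀ i ∈ Icc 1 M,
      NtrM M N' lam L' i a = NtrM M N lam L i a := by
  intro a ha i hi
  simp only [mem_Icc] at ha hi
  have key : ∑ b ∈ Icc a M, ∑ j ∈ Icc i M, (L' b j : ℤ)
      = ∑ b ∈ Icc a M, ∑ j ∈ Icc i M, (L b j : ℤ)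
        + ((if r - 1 ∈ Icc a M then (1:ℤ) else 0) + (if (1:ℕ) ∈ Icc a M then 1 else 0)
            - (if r ∈ Icc a M then 1 else 0)) * (if s ∈ Icc i M then 1 else 0) := by
    simp only [hL', Finset.sum_add_distrib, ← Finset.mul_sum]
    rw [show (∑ j ∈ Icc i M, (if j = s then (1:ℤ) else 0)) = (if s ∈ Icc i M then 1 else 0)
        from Finset.sum_ite_eq' _ _ _]
    rw [← Finset.sum_mul, Finset.sum_sub_distrib, Finset.sum_add_distrib,
      Finset.sum_ite_eq' _ _ (fun _ => (1:ℤ)), Finset.sum_ite_eq' _ _ (fun _ => (1:ℤ)),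
      Finset.sum_ite_eq' _ _ (fun _ => (1:ℤ))]
  unfold NtrM
  rw [hN' a i, key]
  simp only [mem_Icc]
  have h1 : (if a ≤ r - 1 ∧ r - 1 ≤ M then (1:ℤ) else 0) + (if a ≤ 1 ∧ 1 ≤ M then 1 else 0)
      - (if a ≤ r ∧ r ≤ M then 1 else 0)
      = -((if a = r then (1:ℤ) else 0) - (if a = 1 then 1 else 0)) := by
    split_ifs <;> omega
  rw [h1]
  by_cases hi' : i ≤ s
  · have : (if i ≤ s ∧ s ≤ M then (1:ℤ) else 0) = 1 := by simp [hi', hsM]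
    rw [this]
    simp [hi']
    ring
  · have : (if i ≤ s ∧ s ≤ M then (1:ℤ) else 0) = 0 := by simp [hi']
    rw [this]
    simp [hi']
end
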